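/- arXiv:2505.05126 — 2 statements merged into one kernel-verified Lean document; each statement's English description precedes it below -/
import Mathlib

section
/- Let x, x′ : ι → ℝ and ε ≥ 0 with |xᵢ − x′ᵢ| ≤ ε for every i ∈ supp w. If y satisfies the τ-expectile FOC for (w, x) and y′ satisfies the τ-expectile FOC for (w, x′), then |y − y′| ≤ ε; that is, the τ-expectile is 1-Lipschitz with respect to the sup norm over the support of w. -/
open Finset

/-- `y` satisfies the τ-expectile first-order condition (FOC) for weights `w` and values `x`. -/
def ExpectileFOC {ι : Type*} [Fintype ι] (τ : ℝ) (w x : ι → ℝ) (y : ℝ) : Prop :=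
  τ * ∑ i, w i * max (x i - y) 0 = (1 - τ) * ∑ i, w i * max (y - x i) 0

/-!
Writing `s_τ(a) = τ·a⁺ − (1 − τ)·a⁻`, the FOC says `∑ᵢ wᵢ s_τ(xᵢ − y) = 0`, and `s_τ` is strictly
increasing. If `y' > y + ε` while `x'ᵢ ≤ xᵢ + ε` on the support, then `x'ᵢ − y' < xᵢ − y` there, so
`0 = ∑ᵢ wᵢ s_τ(x'ᵢ − y') < ∑ᵢ wᵢ s_τ(xᵢ − y) = 0`. Exchanging the roles gives the other bound.
-/

def expectileScore (τ a : ℝ) : ℝ :=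
  τ * max a 0 - (1 - τ) * max (-a) 0

lemma expectileScore_strictMono {τ : ℝ} (hτ : τ ∈ Set.Ioo (0 : ℝ) 1) :
    StrictMono (expectileScore τ) := by
  intro s t hst
  have hneg : max (-t) 0 ≤ max (-s) 0 := max_le_max_right 0 (neg_le_neg hst.le)
  unfold expectileScore
  rcases (max_le_max_right 0 hst.le).lt_or_eq with hpos | hpos
  · nlinarith [hτ.1, hτ.2]
  · have : max (-t) 0 < max (-s) 0 := by
      linarith [max_zero_sub_max_neg_zero_eq_self s, max_zero_sub_max_neg_zero_eq_self t]
    nlinarith [hτ.1, hτ.2]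

lemma expectileFOC_iff_sum_score_eq_zero {ι : Type*} [Fintype ι] {τ : ℝ} {w x : ι → ℝ}
    {y : ℝ} : ExpectileFOC τ w x y ↔ ∑ i, w i * expectileScore τ (x i - y) = 0 := by
  have hsum : ∑ i, w i * expectileScore τ (x i - y) =
      τ * ∑ i, w i * max (x i - y) 0 - (1 - τ) * ∑ i, w i * max (y - x i) 0 := by
    simp only [expectileScore, neg_sub, mul_sum, ← sum_sub_distrib]
    exact sum_congr rfl fun i _ => by ring
  rw [hsum, sub_eq_zero, ExpectileFOC]

lemma ExpectileFOC.le_add_of_le_add {ι : Type*} [Fintype ι] {τ : ℝ}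
    (hτ : τ ∈ Set.Ioo (0 : ℝ) 1) {w x x' : ι → ℝ} (hw : ∀ i, 0 ≤ w i) (hpos : ∃ i, 0 < w i)
    {ε y y' : ℝ} (hx : ∀ i, 0 < w i → x' i ≤ x i + ε)
    (h : ExpectileFOC τ w x y) (h' : ExpectileFOC τ w x' y') : y' ≤ y + ε := by
  rw [expectileFOC_iff_sum_score_eq_zero] at h h'
  by_contra! hy
  have hlt : ∀ i, 0 < w i →
      expectileScore τ (x' i - y') < expectileScore τ (x i - y) := fun i hi =>
    expectileScore_strictMono hτ (by linarith [hx i hi])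
  have hsum_lt : ∑ i, w i * expectileScore τ (x' i - y') <
      ∑ i, w i * expectileScore τ (x i - y) := by
    obtain ⟨j, hj⟩ := hpos
    refine sum_lt_sum (fun i _ => ?_) ⟨j, mem_univ j, mul_lt_mul_of_pos_left (hlt j hj) hj⟩
    rcases (hw i).eq_or_lt with hi | hi
    · simp [← hi]
    · exact mul_le_mul_of_nonneg_left (hlt i hi).le hi.le
  linarith

theorem expectile_lipschitz_in_values_general {ι : Type*} [Fintype ι] (τ : ℝ)
    (hτ : τ ∈ Set.Ioo (0 : ℝ) 1) (w : ι → ℝ) (hw : ∀ i, 0 ≤ w i) (hw1 : ∑ i, w i = 1)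
    (x x' : ι → ℝ) (ε : ℝ) (hx : ∀ i, 0 < w i → |x i - x' i| ≤ ε)
    (y y' : ℝ) (h : ExpectileFOC τ w x y) (h' : ExpectileFOC τ w x' y') :
    |y - y'| ≤ ε := by
  have hpos : ∃ i, 0 < w i := by
    obtain ⟨i, -, hi⟩ := exists_ne_zero_of_sum_ne_zero (hw1 ▸ one_ne_zero : ∑ i, w i ≠ 0)
    exact ⟨i, (hw i).lt_of_ne' hi⟩
  rw [abs_sub_le_iff, sub_le_iff_le_add', sub_le_iff_le_add']
  constructor
  · refine ExpectileFOC.le_add_of_le_add hτ hw hpos (fun i hi => ?_) h' h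
    linarith [(abs_le.mp (hx i hi)).2]
  · refine ExpectileFOC.le_add_of_le_add hτ hw hpos (fun i hi => ?_) h h'
    linarith [(abs_le.mp (hx i hi)).1]

/-- The τ-expectile is 1-Lipschitz with respect to the sup norm of the values over the
support of the weights. -/
theorem expectile_lipschitz_in_values {ι : Type*} [Fintype ι] (τ : ℝ)
    (hτ : τ ∈ Set.Ioo (0 : ℝ) 1) (w : ι → ℝ) (hw : ∀ i, 0 ≤ w i) (hw1 : ∑ i, w i = 1)
    (x x' : ι → ℝ) (ε : ℝ) (hε : 0 ≤ ε) (hx : ∀ i, 0 < w i → |x i - x' i| ≤ ε)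
    (y y' : ℝ) (h : ExpectileFOC τ w x y) (h' : ExpectileFOC τ w x' y') :
    |y - y'| ≤ ε :=
  expectile_lipschitz_in_values_general τ hτ w hw hw1 x x' ε hx y y' h h'
end

section
/- Let R_max ≥ 0 and assume |r s a| ≤ R_max for all s, a, and ‖Adv‖∞ ≤ 2·R_max/(1 − γ). If Q_A : S → A → ℝ satisfies T_A Q_A = Q_A and Q : S → A → ℝ satisfies T Q = Q, then ‖Q_A − Q‖∞ ≤ 2·λ·R_max/(1 − γ)². -/
open Finset

/-- The advantage-based Bellman operator:
`(T_A Q) s a = r s a + γ * ∑ s', P s a s' * ∑ a', π s' a' * (Q s' a' + λ * Adv s' a')`. -/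
noncomputable def advBellman {S A : Type*} [Fintype S] [Fintype A]
    (γ lam : ℝ) (r : S → A → ℝ) (P : S → A → S → ℝ) (pol : S → A → ℝ)
    (Adv : S → A → ℝ) (Q : S → A → ℝ) : S → A → ℝ :=
  fun s a => r s a + γ * ∑ s', P s a s' * ∑ a', pol s' a' * (Q s' a' + lam * Adv s' a')

/-- The standard Bellman operator:
`(T Q) s a = r s a + γ * ∑ s', P s a s' * ∑ a', π s' a' * Q s' a'`. -/
noncomputable def stdBellman {S A : Type*} [Fintype S] [Fintype A]
    (γ : ℝ) (r : S → A → ℝ) (P : S → A → S → ℝ) (pol : S → A → ℝ)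
    (Q : S → A → ℝ) : S → A → ℝ :=
  fun s a => r s a + γ * ∑ s', P s a s' * ∑ a', pol s' a' * Q s' a'

/-- The sup norm `‖Q‖∞ = max_{(s,a)} |Q s a|`. -/
noncomputable def supNorm {S A : Type*} [Fintype S] [Fintype A] [Nonempty S] [Nonempty A]
    (Q : S → A → ℝ) : ℝ :=
  Finset.univ.sup' Finset.univ_nonempty (fun p : S × A => |Q p.1 p.2|)

/-! The two fixed points satisfy `Q_A - Q = γ P π (Q_A - Q + λ Adv)`, and `P π` is an averaging
operator, so `D := ‖Q_A - Q‖∞` obeys `D ≤ γ (D + λ ‖Adv‖∞)`, i.e. `D ≤ γ λ ‖Adv‖∞ / (1 - γ)`.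
Inserting `‖Adv‖∞ ≤ 2 R_max / (1 - γ)` and `γ ≤ 1` gives the bound. -/

theorem abs_sum_mul_le_of_sum_eq_one {ι : Type*} (t : Finset ι) {w f : ι → ℝ} {c : ℝ}
    (hw0 : ∀ i ∈ t, 0 ≤ w i) (hw1 : ∑ i ∈ t, w i = 1) (hf : ∀ i ∈ t, |f i| ≤ c) :
    |∑ i ∈ t, w i * f i| ≤ c :=
  calc |∑ i ∈ t, w i * f i| ≤ ∑ i ∈ t, |w i * f i| := abs_sum_le_sum_abs _ _
    _ ≤ ∑ i ∈ t, w i * c := sum_le_sum fun i hi => by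
        rw [abs_mul, abs_of_nonneg (hw0 i hi)]
        exact mul_le_mul_of_nonneg_left (hf i hi) (hw0 i hi)
    _ = c := by rw [← sum_mul, hw1, one_mul]

section supNorm

variable {S A : Type*} [Fintype S] [Fintype A] [Nonempty S] [Nonempty A]

theorem abs_le_supNorm (Q : S → A → ℝ) (s : S) (a : A) : |Q s a| ≤ supNorm Q :=
  le_sup' (fun p : S × A => |Q p.1 p.2|) (mem_univ (s, a))

theorem supNorm_le {Q : S → A → ℝ} {c : ℝ} (h : ∀ s a, |Q s a| ≤ c) : supNorm Q ≤ c :=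
  sup'_le _ _ fun p _ => h p.1 p.2

theorem supNorm_nonneg (Q : S → A → ℝ) : 0 ≤ supNorm Q :=
  (abs_nonneg _).trans (abs_le_supNorm Q (Classical.arbitrary S) (Classical.arbitrary A))

end supNorm

section Bellman

variable {S A : Type*} [Fintype S] [Fintype A]

theorem advBellman_sub_stdBellman (γ lam : ℝ) (r : S → A → ℝ) (P : S → A → S → ℝ)
    (pol Adv QA Q : S → A → ℝ) (s : S) (a : A) :
    advBellman γ lam r P pol Adv QA s a - stdBellman γ r P pol Q s a =
      γ * ∑ s', P s a s' * ∑ a', pol s' a' * (QA s' a' - Q s' a' + lam * Adv s' a') := by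
  simp only [advBellman, stdBellman, mul_add, mul_sub, sum_add_distrib, sum_sub_distrib]
  ring

theorem abs_advBellman_sub_stdBellman_le [Nonempty S] [Nonempty A] {γ lam : ℝ} (hγ : 0 ≤ γ)
    (hlam : 0 ≤ lam) (r : S → A → ℝ) {P : S → A → S → ℝ} (hP0 : ∀ s a s', 0 ≤ P s a s')
    (hP1 : ∀ s a, ∑ s', P s a s' = 1) {pol : S → A → ℝ} (hpol0 : ∀ s a, 0 ≤ pol s a)
    (hpol1 : ∀ s, ∑ a, pol s a = 1) (Adv QA Q : S → A → ℝ) (s : S) (a : A) :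
    |advBellman γ lam r P pol Adv QA s a - stdBellman γ r P pol Q s a| ≤
      γ * (supNorm (fun s a => QA s a - Q s a) + lam * supNorm Adv) := by
  have hterm : ∀ s' a', |QA s' a' - Q s' a' + lam * Adv s' a'| ≤
      supNorm (fun s a => QA s a - Q s a) + lam * supNorm Adv := fun s' a' =>
    calc |QA s' a' - Q s' a' + lam * Adv s' a'| ≤ |QA s' a' - Q s' a'| + |lam * Adv s' a'| :=
          abs_add_le _ _
      _ = |QA s' a' - Q s' a'| + lam * |Adv s' a'| := by rw [abs_mul, abs_of_nonneg hlam]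
      _ ≤ supNorm (fun s a => QA s a - Q s a) + lam * supNorm Adv :=
          add_le_add (abs_le_supNorm (fun s a => QA s a - Q s a) s' a')
            (mul_le_mul_of_nonneg_left (abs_le_supNorm Adv s' a') hlam)
  rw [advBellman_sub_stdBellman, abs_mul, abs_of_nonneg hγ]
  refine mul_le_mul_of_nonneg_left ?_ hγ
  exact abs_sum_mul_le_of_sum_eq_one _ (fun s' _ => hP0 s a s') (hP1 s a) fun s' _ =>
    abs_sum_mul_le_of_sum_eq_one _ (fun a' _ => hpol0 s' a') (hpol1 s') fun a' _ => hterm s' a'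

end Bellman

theorem advBellman_fixedPoint_dist_of_bounded_general {S A : Type*} [Fintype S] [Fintype A]
    [Nonempty S] [Nonempty A]
    (γ : ℝ) (hγ : γ ∈ Set.Ioo (0 : ℝ) 1)
    (r : S → A → ℝ) (Rmax : ℝ)
    (P : S → A → S → ℝ) (hP0 : ∀ s a s', 0 ≤ P s a s') (hP1 : ∀ s a, ∑ s', P s a s' = 1)
    (pol : S → A → ℝ) (hpol0 : ∀ s a, 0 ≤ pol s a) (hpol1 : ∀ s, ∑ a, pol s a = 1)
    (Adv : S → A → ℝ) (hAdv : supNorm Adv ≤ 2 * Rmax / (1 - γ))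
    (lam : ℝ) (hlam : 0 ≤ lam)
    (QA Q : S → A → ℝ)
    (hQA : advBellman γ lam r P pol Adv QA = QA)
    (hQ : stdBellman γ r P pol Q = Q) :
    supNorm (fun s a => QA s a - Q s a) ≤ 2 * lam * Rmax / (1 - γ) ^ 2 := by
  obtain ⟨hγ0, hγ1⟩ := hγ
  set D := supNorm (fun s a => QA s a - Q s a)
  have hcontract : D ≤ γ * (D + lam * supNorm Adv) := supNorm_le fun s a => by
    simpa only [hQA, hQ] using abs_advBellman_sub_stdBellman_le hγ0.le hlam r hP0 hP1 hpol0 hpol1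
      Adv QA Q s a
  have hlamAdv : lam * supNorm Adv ≤ lam * (2 * Rmax / (1 - γ)) :=
    mul_le_mul_of_nonneg_left hAdv hlam
  have hAdv0 : 0 ≤ lam * supNorm Adv := mul_nonneg hlam (supNorm_nonneg Adv)
  have hD : D * (1 - γ) ≤ lam * (2 * Rmax / (1 - γ)) := by nlinarith
  calc D ≤ lam * (2 * Rmax / (1 - γ)) / (1 - γ) := (le_div_iff₀ (by linarith)).2 hD
    _ = 2 * lam * Rmax / (1 - γ) ^ 2 := by field_simp

/-- With rewards bounded by `R_max` and `‖Adv‖∞ ≤ 2 R_max / (1 - γ)`, the fixed points of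
the advantage-based and the standard Bellman operators differ by at most
`2 * λ * R_max / (1 - γ)²` in sup norm. -/
theorem advBellman_fixedPoint_dist_of_bounded {S A : Type*} [Fintype S] [Fintype A]
    [Nonempty S] [Nonempty A]
    (γ : ℝ) (hγ : γ ∈ Set.Ioo (0 : ℝ) 1)
    (r : S → A → ℝ) (Rmax : ℝ) (hR : 0 ≤ Rmax) (hr : ∀ s a, |r s a| ≤ Rmax)
    (P : S → A → S → ℝ) (hP0 : ∀ s a s', 0 ≤ P s a s') (hP1 : ∀ s a, ∑ s', P s a s' = 1)
    (pol : S → A → ℝ) (hpol0 : ∀ s a, 0 ≤ pol s a) (hpol1 : ∀ s, ∑ a, pol s a = 1)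
    (Adv : S → A → ℝ) (hAdv : supNorm Adv ≤ 2 * Rmax / (1 - γ))
    (lam : ℝ) (hlam : 0 ≤ lam)
    (QA Q : S → A → ℝ)
    (hQA : advBellman γ lam r P pol Adv QA = QA)
    (hQ : stdBellman γ r P pol Q = Q) :
    supNorm (fun s a => QA s a - Q s a) ≤ 2 * lam * Rmax / (1 - γ) ^ 2 :=
  advBellman_fixedPoint_dist_of_bounded_general γ hγ r Rmax P hP0 hP1 pol hpol0 hpol1 Adv hAdv lam
    hlam QA Q hQA hQ
end
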